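/- Let (G, ≤) be a lefthanded graph with labels p_v ∈ [0,1] such that B(S) > 0 for all S ⊆ V, and x_v = p_v·B(F_v)/B(D_v). Then for every vertex v, Π_{u ∈ N_v} (B(D̄_u)/B(D_u)) = (Π_{u ∈ μ(D_v)} B(D̄_u)) · (Π_{u ∈ μ(F_v)} B(D̄_u))^{−1} = B(D_v)/B(F_v). -/

import Mathlib

open scoped Classical

/-- A tree order: whenever `w < u` and `w < v`, the elements `u` and `v` are comparable. -/
def TreeOrder (V : Type*) [PartialOrder V] : Prop :=
  ∀ w u v : V, w < u → w < v → (u ≤ v ∨ v ≤ u)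

/-- A lefthanded graph with respect to the partial order on `V`. -/
def Lefthanded {V : Type*} [PartialOrder V] (G : SimpleGraph V) : Prop :=
  TreeOrder V ∧
  (∀ u v : V, G.Adj u v → u ≤ v ∨ v ≤ u) ∧
  (∀ w u v : V, w < u → u < v → G.Adj v w → G.Adj v u)

/-- `D_v = {u : u < v}`. -/
noncomputable def Dset {V : Type*} [Fintype V] [PartialOrder V] (v : V) : Finset V :=
  Finset.univ.filter (fun u => u < v)

/-- `D̄_v = D_v ∪ {v}`. -/
noncomputable def Dbar {V : Type*} [Fintype V] [DecidableEq V] [PartialOrder V] (v : V) :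
    Finset V :=
  insert v (Dset v)

/-- `N_v = {u < v : u ~ v}`. -/
noncomputable def Nset {V : Type*} [Fintype V] [PartialOrder V] (G : SimpleGraph V) (v : V) :
    Finset V :=
  Finset.univ.filter (fun u => u < v ∧ G.Adj u v)

/-- `F_v = D_v \ N_v`. -/
noncomputable def Fset {V : Type*} [Fintype V] [DecidableEq V] [PartialOrder V]
    (G : SimpleGraph V) (v : V) : Finset V :=
  Dset v \ Nset G v

/-- `μ(U)`: the set of maximal elements of `U`. -/
noncomputable def maxElts {V : Type*} [PartialOrder V] (U : Finset V) : Finset V :=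
  U.filter (fun u => ∀ w ∈ U, ¬ u < w)

/-- `I` is an independent set of `G`. -/
def IndepSet {V : Type*} (G : SimpleGraph V) (I : Finset V) : Prop :=
  ∀ u ∈ I, ∀ w ∈ I, ¬ G.Adj u w

/-- `B(S) = Σ_{I ⊆ S, I independent} (−1)^{|I|} Π_{v∈I} p_v`. -/
noncomputable def Bfun {V : Type*} [Fintype V] (G : SimpleGraph V) (p : V → ℝ) (S : Finset V) :
    ℝ :=
  ∑ I ∈ S.powerset.filter (fun I => IndepSet G I), (-1 : ℝ) ^ I.card * ∏ v ∈ I, p v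

/-- `𝔮(S) = Σ_{I ⊇ S, I independent} (−1)^{|I|−|S|} Π_{v∈I} p_v`. -/
noncomputable def qfun {V : Type*} [Fintype V] (G : SimpleGraph V) (p : V → ℝ) (S : Finset V) :
    ℝ :=
  ∑ I ∈ Finset.univ.powerset.filter (fun I => IndepSet G I ∧ S ⊆ I),
    (-1 : ℝ) ^ (I.card - S.card) * ∏ v ∈ I, p v

/-- A down-closed set. -/
def DownClosed {V : Type*} [Fintype V] [PartialOrder V] (S : Finset V) : Prop :=
  ∀ s ∈ S, Dset s ⊆ S


/-! Two independent sets in vertex sets with no edges between them combine freely, so `B` is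
multiplicative over such unions. In a tree order whose edges join comparable vertices, distinct
maximal elements of a down-closed set `S` have disjoint, mutually non-adjacent closed down-sets,
so `B(S) = ∏_{w ∈ μ(S)} B(D̄_w)`. Applied to `D_v`, `D_u` and `F_v`, the second equality becomes
`B(D_v) ∏_{u ∈ N_v} B(D_u) = ∏_{u ∈ N_v} B(D̄_u) · B(F_v)`, which reduces to the set identity
`μ(D_v) ⊔ ⨆_{u ∈ N_v} μ(D_u) = N_v ⊔ μ(F_v)`: by lefthandedness both sides consist of the
`w < v` such that every `x` with `w < x < v` is a neighbour of `v`. -/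

section IndependencePolynomial

variable {V : Type*} {G : SimpleGraph V}

lemma IndepSet.mono {I J : Finset V} (hJ : IndepSet G J) (hIJ : I ⊆ J) : IndepSet G I :=
  fun u hu w hw => hJ u (hIJ hu) w (hIJ hw)

lemma indepSet_union_iff [DecidableEq V] {I J : Finset V} (hIJ : ∀ a ∈ I, ∀ b ∈ J, ¬ G.Adj a b) :
    IndepSet G (I ∪ J) ↔ IndepSet G I ∧ IndepSet G J := by
  refine ⟨fun h => ⟨h.mono Finset.subset_union_left, h.mono Finset.subset_union_right⟩, ?_⟩
  rintro ⟨hI, hJ⟩ x hx y hy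
  simp only [Finset.mem_union] at hx hy
  rcases hx with hx | hx <;> rcases hy with hy | hy
  · exact hI x hx y hy
  · exact hIJ x hx y hy
  · exact fun h => hIJ y hy x hx h.symm
  · exact hJ x hx y hy

variable [Fintype V]

lemma Bfun_eq_sum_powerset (p : V → ℝ) (S : Finset V) :
    Bfun G p S = ∑ I ∈ S.powerset, if IndepSet G I then (-1 : ℝ) ^ I.card * ∏ v ∈ I, p v else 0 :=
  Finset.sum_filter _ _

lemma Bfun_empty (p : V → ℝ) : Bfun G p ∅ = 1 := by
  simp [Bfun_eq_sum_powerset, IndepSet]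

variable [DecidableEq V]

lemma Bfun_union (p : V → ℝ) {A B : Finset V} (hAB : Disjoint A B)
    (hadj : ∀ a ∈ A, ∀ b ∈ B, ¬ G.Adj a b) :
    Bfun G p (A ∪ B) = Bfun G p A * Bfun G p B := by
  simp only [Bfun_eq_sum_powerset, Finset.sum_mul_sum, ← Finset.sum_product']
  refine Finset.sum_nbij' (fun K => (K ∩ A, K ∩ B)) (fun IJ => IJ.1 ∪ IJ.2) ?_ ?_ ?_ ?_ ?_
  · intro K _
    simp
  · intro IJ h
    simp only [Finset.mem_product, Finset.mem_powerset] at h ⊢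
    exact Finset.union_subset_union h.1 h.2
  · intro K hK
    simp only [Finset.mem_powerset] at hK
    rw [← Finset.inter_union_distrib_left, Finset.inter_eq_left.mpr hK]
  · intro IJ h
    simp only [Finset.mem_product, Finset.mem_powerset] at h
    have hdisj := Finset.disjoint_left.1 hAB
    ext x <;> simp only [Finset.mem_inter, Finset.mem_union] <;> grind
  · intro K hK
    have hd : Disjoint (K ∩ A) (K ∩ B) :=
      hAB.mono Finset.inter_subset_right Finset.inter_subset_right
    have hK : K = (K ∩ A) ∪ (K ∩ B) := by
      rw [← Finset.inter_union_distrib_left, Finset.inter_eq_left.mpr (Finset.mem_powerset.1 hK)]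
    conv_lhs => rw [hK]
    rw [indepSet_union_iff fun a ha b hb =>
        hadj a (Finset.mem_inter.1 ha).2 b (Finset.mem_inter.1 hb).2,
      Finset.card_union_of_disjoint hd, Finset.prod_union hd, ite_zero_mul_ite_zero, pow_add,
      mul_mul_mul_comm]
    split_ifs <;> rfl

lemma Bfun_biUnion {ι : Type*} [DecidableEq ι] (p : V → ℝ) (T : Finset ι) (f : ι → Finset V)
    (hf : ∀ a ∈ T, ∀ b ∈ T, a ≠ b →
      Disjoint (f a) (f b) ∧ ∀ x ∈ f a, ∀ y ∈ f b, ¬ G.Adj x y) :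
    Bfun G p (T.biUnion f) = ∏ t ∈ T, Bfun G p (f t) := by
  induction T using Finset.induction_on with
  | empty => exact Bfun_empty p
  | @insert a T ha ih =>
    have hfa : ∀ b ∈ T, Disjoint (f a) (f b) ∧ ∀ x ∈ f a, ∀ y ∈ f b, ¬ G.Adj x y := fun b hb =>
      hf a (Finset.mem_insert_self a T) b (T.mem_insert_of_mem hb)
        (ne_of_mem_of_not_mem hb ha).symm
    rw [Finset.biUnion_insert, Finset.prod_insert ha,
      Bfun_union p ((Finset.disjoint_biUnion_right _ _ _).2 fun b hb => (hfa b hb).1)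
        (fun x hx y hy => by
          obtain ⟨b, hb, hyb⟩ := Finset.mem_biUnion.1 hy
          exact (hfa b hb).2 x hx y hyb),
      ih fun a ha b hb => hf a (T.mem_insert_of_mem ha) b (T.mem_insert_of_mem hb)]

end IndependencePolynomial

section TreeOrder

variable {V : Type*} [PartialOrder V]

lemma TreeOrder.not_le_of_le_of_le (ht : TreeOrder V) {a b x y : V} (hab : ¬ a ≤ b)
    (hba : ¬ b ≤ a) (hx : x ≤ a) (hy : y ≤ b) : ¬ x ≤ y := by
  intro hxy
  rcases hx.eq_or_lt with rfl | hxa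
  · exact hab (hxy.trans hy)
  rcases (hxy.trans hy).eq_or_lt with rfl | hxb
  · exact hba hxa.le
  rcases ht x a b hxa hxb with h | h
  exacts [hab h, hba h]

lemma TreeOrder.le_of_covBy_of_lt (ht : TreeOrder V) {w u x : V} (hwu : w ⋖ u) (hwx : w < x) :
    u ≤ x := by
  rcases ht w u x hwu.lt hwx with h | h
  · exact h
  · rcases hwu.eq_or_eq hwx.le h with rfl | rfl
    exacts [absurd hwx (lt_irrefl _), le_rfl]

lemma TreeOrder.eq_of_covBy (ht : TreeOrder V) {w a b : V} (ha : w ⋖ a) (hb : w ⋖ b) :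
    a = b :=
  (ht.le_of_covBy_of_lt ha hb.lt).antisymm (ht.le_of_covBy_of_lt hb ha.lt)

lemma mem_maxElts_iff_maximal {U : Finset V} {u : V} : u ∈ maxElts U ↔ Maximal (· ∈ U) u := by
  simp only [maxElts, Finset.mem_filter, maximal_iff_forall_gt]
  exact and_congr_right fun _ => ⟨fun h _ hy hyU => h _ hyU hy, fun h _ hyU hy => h hy hyU⟩

lemma not_le_of_mem_maxElts {U : Finset V} {a b : V} (ha : a ∈ maxElts U) (hb : b ∈ maxElts U)
    (hab : a ≠ b) : ¬ a ≤ b := fun h =>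
  (mem_maxElts_iff_maximal.1 ha).not_gt (mem_maxElts_iff_maximal.1 hb).prop (h.lt_of_ne hab)

variable [Fintype V]

@[simp] lemma mem_Dset {u v : V} : u ∈ Dset v ↔ u < v := by simp [Dset]

@[simp] lemma mem_Dbar [DecidableEq V] {u v : V} : u ∈ Dbar v ↔ u ≤ v := by
  simp [Dbar, le_iff_eq_or_lt]

@[simp] lemma mem_Nset {G : SimpleGraph V} {u v : V} : u ∈ Nset G v ↔ u < v ∧ G.Adj u v := by
  simp [Nset]

@[simp] lemma mem_Fset [DecidableEq V] {G : SimpleGraph V} {u v : V} :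
    u ∈ Fset G v ↔ u < v ∧ ¬ G.Adj u v := by
  simp +contextual [Fset]

lemma mem_maxElts_Dset {w u : V} : w ∈ maxElts (Dset u) ↔ w ⋖ u := by
  simp only [maxElts, Finset.mem_filter, mem_Dset, CovBy]
  exact and_congr_right fun _ => forall_congr' fun x => by tauto

lemma TreeOrder.pairwiseDisjoint_maxElts_Dset (ht : TreeOrder V) (s : Set V) :
    s.PairwiseDisjoint fun u => maxElts (Dset u) := by
  intro a _ b _ hab
  rw [Function.onFun, Finset.disjoint_left]
  intro w hwa hwb
  exact hab (ht.eq_of_covBy (mem_maxElts_Dset.1 hwa) (mem_maxElts_Dset.1 hwb))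

lemma downClosed_Dset (v : V) : DownClosed (Dset v) := fun _ hs _ ht =>
  mem_Dset.2 ((mem_Dset.1 ht).trans (mem_Dset.1 hs))

variable [DecidableEq V]

lemma DownClosed.biUnion_maxElts_Dbar {S : Finset V} (hS : DownClosed S) :
    (maxElts S).biUnion Dbar = S := by
  ext x
  simp only [Finset.mem_biUnion, mem_Dbar, mem_maxElts_iff_maximal]
  constructor
  · rintro ⟨m, hm, hxm⟩
    rcases hxm.eq_or_lt with rfl | hxm
    exacts [hm.prop, hS m hm.prop (mem_Dset.2 hxm)]
  · intro hx
    obtain ⟨m, hxm, hm⟩ := S.exists_le_maximal hx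
    exact ⟨m, hm, hxm⟩

lemma DownClosed.Bfun_eq_prod_maxElts {G : SimpleGraph V} (p : V → ℝ) (ht : TreeOrder V)
    (hcomp : ∀ u v : V, G.Adj u v → u ≤ v ∨ v ≤ u) {S : Finset V} (hS : DownClosed S) :
    Bfun G p S = ∏ w ∈ maxElts S, Bfun G p (Dbar w) := by
  conv_lhs => rw [← hS.biUnion_maxElts_Dbar]
  have hinc {a b : V} (ha : a ∈ maxElts S) (hb : b ∈ maxElts S) (hab : a ≠ b) {x y : V}
      (hx : x ∈ Dbar a) (hy : y ∈ Dbar b) : ¬ x ≤ y :=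
    ht.not_le_of_le_of_le (not_le_of_mem_maxElts ha hb hab)
      (not_le_of_mem_maxElts hb ha hab.symm) (mem_Dbar.1 hx) (mem_Dbar.1 hy)
  exact Bfun_biUnion p _ _ fun a ha b hb hab =>
    ⟨Finset.disjoint_left.2 fun x hx hx' => hinc ha hb hab hx hx' le_rfl,
      fun x hx y hy hxy =>
        (hcomp x y hxy).elim (hinc ha hb hab hx hy) (hinc hb ha hab.symm hy hx)⟩

end TreeOrder

section Lefthanded

variable {V : Type*} [PartialOrder V] {G : SimpleGraph V}

lemma Lefthanded.adj_of_lt_of_lt (hG : Lefthanded G) {w x v : V} (hwx : w < x) (hxv : x < v)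
    (hwv : G.Adj w v) : G.Adj x v :=
  (hG.2.2 w x v hwx hxv hwv.symm).symm

variable [Fintype V]

lemma covBy_or_exists_covBy_Nset_iff (hG : Lefthanded G) {w v : V} :
    (w ⋖ v ∨ ∃ u ∈ Nset G v, w ⋖ u) ↔ w < v ∧ ∀ x, w < x → x < v → G.Adj x v := by
  constructor
  · rintro (hwv | ⟨u, hu, hwu⟩)
    · exact ⟨hwv.lt, fun x hwx hxv => absurd hxv (hwv.2 hwx)⟩
    · rw [mem_Nset] at hu
      refine ⟨hwu.lt.trans hu.1, fun x hwx hxv => ?_⟩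
      rcases (hG.1.le_of_covBy_of_lt hwu hwx).eq_or_lt with rfl | hux
      exacts [hu.2, hG.adj_of_lt_of_lt hux hxv hu.2]
  · rintro ⟨hwv, hadj⟩
    obtain ⟨u, hwu, huv⟩ := exists_covBy_le_of_lt hwv
    rcases huv.eq_or_lt with rfl | huv
    exacts [Or.inl hwu, Or.inr ⟨u, mem_Nset.2 ⟨huv, hadj u hwu.lt huv⟩, hwu⟩]

variable [DecidableEq V]

lemma downClosed_Fset (hG : Lefthanded G) (v : V) : DownClosed (Fset G v) := by
  intro s hs t hts
  rw [mem_Fset] at hs ⊢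
  have hts := mem_Dset.1 hts
  exact ⟨hts.trans hs.1, fun htv => hs.2 (hG.adj_of_lt_of_lt hts hs.1 htv)⟩

lemma mem_maxElts_Fset {w v : V} :
    w ∈ maxElts (Fset G v) ↔ w ∈ Fset G v ∧ ∀ x, w < x → x < v → G.Adj x v := by
  simp only [maxElts, Finset.mem_filter, mem_Fset]
  exact and_congr_right fun _ => ⟨fun h x hwx hxv => by_contra fun hx => h x ⟨hxv, hx⟩ hwx,
    fun h x hx hwx => hx.2 (h x hwx hx.1)⟩

lemma biUnion_maxElts_Dset_insert_Nset (hG : Lefthanded G) (v : V) :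
    (insert v (Nset G v)).biUnion (fun u => maxElts (Dset u))
      = Nset G v ∪ maxElts (Fset G v) := by
  ext w
  have hcov := covBy_or_exists_covBy_Nset_iff hG (w := w) (v := v)
  simp only [Finset.mem_biUnion, Finset.mem_insert, exists_eq_or_imp, mem_maxElts_Dset,
    Finset.mem_union, mem_maxElts_Fset, mem_Nset, mem_Fset] at hcov ⊢
  rw [hcov]
  constructor
  · rintro ⟨hwv, hadj⟩
    by_cases hw : G.Adj w v
    exacts [Or.inl ⟨hwv, hw⟩, Or.inr ⟨⟨hwv, hw⟩, hadj⟩]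
  · rintro (⟨hwv, hw⟩ | ⟨⟨hwv, -⟩, hadj⟩)
    exacts [⟨hwv, fun x hwx hxv => hG.adj_of_lt_of_lt hwx hxv hw⟩, ⟨hwv, hadj⟩]

lemma Bfun_Dset_mul_prod_Nset (hG : Lefthanded G) (p : V → ℝ) (v : V) :
    Bfun G p (Dset v) * ∏ u ∈ Nset G v, Bfun G p (Dset u)
      = (∏ u ∈ Nset G v, Bfun G p (Dbar u)) * Bfun G p (Fset G v) := by
  have hprod (S : Finset V) (hS : DownClosed S) := hS.Bfun_eq_prod_maxElts p hG.1 hG.2.1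
  have hv : v ∉ Nset G v := fun h => lt_irrefl v (mem_Nset.1 h).1
  have hNF : Disjoint (Nset G v) (maxElts (Fset G v)) := Finset.disjoint_left.2 fun w hN hF =>
    (mem_Fset.1 (mem_maxElts_iff_maximal.1 hF).prop).2 (mem_Nset.1 hN).2
  rw [← Finset.prod_insert (f := fun u => Bfun G p (Dset u)) hv,
    Finset.prod_congr rfl fun u _ => hprod _ (downClosed_Dset u),
    ← Finset.prod_biUnion (hG.1.pairwiseDisjoint_maxElts_Dset _),
    biUnion_maxElts_Dset_insert_Nset hG, Finset.prod_union hNF,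
    hprod _ (downClosed_Fset hG v)]

end Lefthanded

theorem stmt16_general {V : Type*} [Fintype V] [DecidableEq V] [PartialOrder V]
    (G : SimpleGraph V) (p : V → ℝ)
    (hG : Lefthanded G) (hB : ∀ S : Finset V, 0 < Bfun G p S) (v : V) :
    (∏ u ∈ Nset G v, (Bfun G p (Dbar u) / Bfun G p (Dset u))
      = (∏ u ∈ maxElts (Dset v), Bfun G p (Dbar u)) /
        (∏ u ∈ maxElts (Fset G v), Bfun G p (Dbar u))) ∧
    (∏ u ∈ Nset G v, (Bfun G p (Dbar u) / Bfun G p (Dset u))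
      = Bfun G p (Dset v) / Bfun G p (Fset G v)) := by
  have hratio : ∏ u ∈ Nset G v, (Bfun G p (Dbar u) / Bfun G p (Dset u))
      = Bfun G p (Dset v) / Bfun G p (Fset G v) := by
    rw [Finset.prod_div_distrib, div_eq_div_iff (Finset.prod_ne_zero_iff.2 fun u _ => (hB _).ne')
      (hB _).ne', ← Bfun_Dset_mul_prod_Nset hG, mul_comm]
  refine ⟨?_, hratio⟩
  rw [hratio, (downClosed_Dset v).Bfun_eq_prod_maxElts p hG.1 hG.2.1,
    (downClosed_Fset hG v).Bfun_eq_prod_maxElts p hG.1 hG.2.1]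

theorem stmt16 {V : Type*} [Fintype V] [DecidableEq V] [PartialOrder V]
    (G : SimpleGraph V) (p : V → ℝ) (hp : ∀ v, 0 ≤ p v ∧ p v ≤ 1)
    (hG : Lefthanded G) (hB : ∀ S : Finset V, 0 < Bfun G p S) (v : V) :
    (∏ u ∈ Nset G v, (Bfun G p (Dbar u) / Bfun G p (Dset u))
      = (∏ u ∈ maxElts (Dset v), Bfun G p (Dbar u)) /
        (∏ u ∈ maxElts (Fset G v), Bfun G p (Dbar u))) ∧
    (∏ u ∈ Nset G v, (Bfun G p (Dbar u) / Bfun G p (Dset u))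
      = Bfun G p (Dset v) / Bfun G p (Fset G v)) :=
  stmt16_general G p hG hB v
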